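/- The van der Waerden number satisfies w(k;c) ≥ c^(k−3)·(k−1)/k² for all k ≥ 2 and c ≥ 2. -/

import Mathlib

/-!
Colour `{1, …, n}` uniformly at random. The event that a fixed `k`-term progression is
monochromatic has probability `c ^ (1 - k)` and is independent of any family of events of
progressions disjoint from it, while a progression meets at most `k ^ 2 ⌊(n - 1) / (k - 1)⌋`
progressions. The symmetric Lovász local lemma, in its counting form with constant `4`, then
gives a colouring without monochromatic `k`-term progression whenever
`4 k ^ 2 ⌊(n - 1) / (k - 1)⌋ ≤ c ^ (k - 1)`, and this rearranges to the bound. That `w(k; c)` is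
finite at all (otherwise `sInf ∅ = 0`) follows from van der Waerden's theorem by compactness.
-/

/-- A coloring χ contains a monochromatic k-term arithmetic progression
within {1,...,n}. -/
def hasMonoAP (c k n : ℕ) (χ : ℕ → Fin c) : Prop :=
  ∃ a d : ℕ, 1 ≤ a ∧ 1 ≤ d ∧ a + (k - 1) * d ≤ n ∧ ∀ i < k, χ (a + i * d) = χ a

/-- The van der Waerden number w(k;c): the least n such that every c-coloring of
{1,...,n} contains a monochromatic k-term arithmetic progression. -/
noncomputable def vdW (k c : ℕ) : ℕ := sInf {n | ∀ χ : ℕ → Fin c, hasMonoAP c k n χ}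

open Finset

section LocalLemma

variable {Ω ι : Type*} [Fintype Ω] [DecidableEq Ω] (E : ι → Finset Ω)

def avoiding (S : Finset ι) : Finset Ω := {ω | ∀ s ∈ S, ω ∉ E s}

variable {E}

lemma mem_avoiding {S : Finset ι} {ω : Ω} : ω ∈ avoiding E S ↔ ∀ s ∈ S, ω ∉ E s := by
  simp [avoiding]

lemma avoiding_empty : avoiding E ∅ = univ := by
  ext; simp [mem_avoiding]

lemma avoiding_anti {S S' : Finset ι} (h : S ⊆ S') : avoiding E S' ⊆ avoiding E S :=
  fun _ hω => mem_avoiding.2 fun s hs => mem_avoiding.1 hω s (h hs)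

variable [DecidableEq ι]

lemma avoiding_insert (t : ι) (S : Finset ι) :
    avoiding E (insert t S) = avoiding E S \ E t := by
  ext ω; simp only [mem_avoiding, mem_sdiff, forall_mem_insert]; tauto

lemma avoiding_subset_union_biUnion (S S' : Finset ι) :
    avoiding E S ⊆ avoiding E S' ∪ (S' \ S).biUnion fun s => avoiding E S ∩ E s := by
  intro ω hω
  by_cases hω' : ω ∈ avoiding E S'
  · exact mem_union_left _ hω'
  · obtain ⟨s, hs, hωs⟩ : ∃ s ∈ S', ω ∈ E s := by simpa [mem_avoiding] using hω'
    refine mem_union_right _ (mem_biUnion.2 ⟨s, mem_sdiff.2 ⟨hs, fun hsS => ?_⟩, ?_⟩)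
    · exact mem_avoiding.1 hω s hsS hωs
    · exact mem_inter.2 ⟨hω, hωs⟩

variable {adj : ι → ι → Prop} [DecidableRel adj] {T : Finset ι} {q : ℕ}

/-- The counting form of the symmetric local lemma: `q * #(A ∩ E t) ≤ #A` says that `E t` has
probability at most `1 / q` given `A`, and `adj` is a dependency graph of the events in `T`. -/
theorem card_avoiding_inter_le
    (hindep : ∀ t ∈ T, ∀ S ⊆ T, (∀ s ∈ S, ¬ adj s t) →
      q * #(avoiding E S ∩ E t) ≤ #(avoiding E S))
    (hdeg : ∀ t ∈ T, 4 * #{s ∈ T | adj s t} ≤ q) :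
    ∀ S ⊆ T, ∀ t ∈ T, q * #(avoiding E S ∩ E t) ≤ 2 * #(avoiding E S) := by
  intro S
  induction S using Finset.strongInduction with
  | H S ih =>
  intro hST t ht
  rcases Nat.eq_zero_or_pos q with rfl | hq
  · simp
  -- `S₀` is the part of `S` independent of `t`; the other at most `q / 4` events of `S` each
  -- remove at most a `2 / q` fraction of `avoiding E S₀`, so `avoiding E S` keeps half of it.
  set S₀ := {s ∈ S | ¬ adj s t}
  have hS₀ : S₀ ⊆ S := filter_subset _ _
  have hnbr : 4 * #(S \ S₀) ≤ q := by
    refine le_trans (Nat.mul_le_mul_left 4 (card_le_card fun s hs => ?_)) (hdeg t ht)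
    obtain ⟨hsS, hsS₀⟩ := mem_sdiff.1 hs
    exact mem_filter.2 ⟨hST hsS, by simpa [S₀, hsS] using hsS₀⟩
  have hIH : ∀ s ∈ S \ S₀, q * #(avoiding E S₀ ∩ E s) ≤ 2 * #(avoiding E S₀) := fun s hs =>
    ih S₀ (ssubset_of_subset_of_ne hS₀ fun h => (mem_sdiff.1 hs).2 (h ▸ (mem_sdiff.1 hs).1))
      (hS₀.trans hST) s (hST (mem_sdiff.1 hs).1)
  have hcover : q * #(avoiding E S₀)
      ≤ q * #(avoiding E S) + #(S \ S₀) * (2 * #(avoiding E S₀)) :=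
    calc q * #(avoiding E S₀)
        ≤ q * (#(avoiding E S) + ∑ s ∈ S \ S₀, #(avoiding E S₀ ∩ E s)) := by
          gcongr
          exact (card_le_card (avoiding_subset_union_biUnion S₀ S)).trans
            ((card_union_le _ _).trans (by gcongr; exact card_biUnion_le))
      _ = q * #(avoiding E S) + ∑ s ∈ S \ S₀, q * #(avoiding E S₀ ∩ E s) := by
          rw [mul_add, mul_sum]
      _ ≤ q * #(avoiding E S) + ∑ s ∈ S \ S₀, 2 * #(avoiding E S₀) :=
          Nat.add_le_add_left (sum_le_sum hIH) _
      _ = q * #(avoiding E S) + #(S \ S₀) * (2 * #(avoiding E S₀)) := by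
          rw [sum_const, smul_eq_mul]
  have hS₀S : #(avoiding E S₀) ≤ 2 * #(avoiding E S) := by
    have := Nat.mul_le_mul_right (2 * #(avoiding E S₀)) hnbr
    refine Nat.le_of_mul_le_mul_left ?_ hq
    nlinarith
  calc q * #(avoiding E S ∩ E t)
      ≤ q * #(avoiding E S₀ ∩ E t) := by gcongr; exact avoiding_anti hS₀
    _ ≤ #(avoiding E S₀) := hindep t ht S₀ (hS₀.trans hST) fun s hs => (mem_filter.1 hs).2
    _ ≤ 2 * #(avoiding E S) := hS₀S

theorem avoiding_nonempty [Nonempty Ω] (hq : 3 ≤ q)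
    (hindep : ∀ t ∈ T, ∀ S ⊆ T, (∀ s ∈ S, ¬ adj s t) →
      q * #(avoiding E S ∩ E t) ≤ #(avoiding E S))
    (hdeg : ∀ t ∈ T, 4 * #{s ∈ T | adj s t} ≤ q) :
    (avoiding E T).Nonempty := by
  suffices ∀ S ⊆ T, (avoiding E S).Nonempty from this T subset_rfl
  intro S
  induction S using Finset.induction_on with
  | empty => simp [avoiding_empty]
  | insert t S _ ih =>
    intro hST
    have hpos := (ih ((subset_insert t S).trans hST)).card_pos
    have hbad := card_avoiding_inter_le hindep hdeg S ((subset_insert t S).trans hST) t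
      (hST (mem_insert_self t S))
    have hsplit := card_inter_add_card_sdiff (avoiding E S) (E t)
    rw [avoiding_insert, ← card_pos]
    nlinarith

end LocalLemma

section UniformColorings

variable {ι : Type*} [Fintype ι] [DecidableEq ι]

theorem card_filter_and_mul_card_pi {α : ι → Type*} [∀ i, Fintype (α i)]
    {P R : (Π i, α i) → Prop} [DecidablePred P] [DecidablePred R] {A : Finset ι}
    (hP : DependsOn P A) (hR : DependsOn R (A : Set ι)ᶜ) :
    #{f | P f ∧ R f} * Fintype.card (Π i, α i) = #{f | P f} * #{f | R f} := by
  have hPA : ∀ f g, P (A.piecewise f g) = P f := fun f g =>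
    hP fun i hi => A.piecewise_eq_of_mem _ _ hi
  have hRA : ∀ f g, R (A.piecewise g f) = R f := fun f g =>
    hR fun i hi => A.piecewise_eq_of_notMem _ _ (by simpa using hi)
  have hswap : ∀ f g : Π i, α i, A.piecewise (A.piecewise f g) (A.piecewise g f) = f := by
    intro f g; ext i; by_cases hi : i ∈ A <;> simp [hi]
  -- Swapping the `A`-coordinates of two points is an involution of the square that exchanges
  -- `{P ∧ R} × univ` and `{P} × {R}`.
  rw [← card_univ, ← card_product, ← card_product]
  refine card_nbij' (fun p => (A.piecewise p.1 p.2, A.piecewise p.2 p.1))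
    (fun p => (A.piecewise p.1 p.2, A.piecewise p.2 p.1)) ?_ ?_ ?_ ?_
  · rintro ⟨f, g⟩ hfg
    simp only [mem_coe, mem_product, mem_filter, mem_univ, true_and, hPA, hRA] at hfg ⊢
    exact hfg.1
  · rintro ⟨f, g⟩ hfg
    simp only [mem_coe, mem_product, mem_filter, mem_univ, true_and, hPA, hRA] at hfg ⊢
    exact ⟨hfg, trivial⟩
  · rintro ⟨f, g⟩ -; simp [hswap]
  · rintro ⟨f, g⟩ -; simp [hswap]

variable (α : Type*) [Fintype α] [DecidableEq α]

def monochromatic (A : Finset ι) : Finset (ι → α) := {f | ∀ i ∈ A, ∀ j ∈ A, f i = f j}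

variable {α}

lemma dependsOn_mem_monochromatic (A : Finset ι) :
    DependsOn (· ∈ monochromatic α A) A := fun f g h => by
  simp only [monochromatic, mem_filter, mem_univ, true_and]
  exact propext (forall₂_congr fun i hi => forall₂_congr fun j hj => by rw [h i hi, h j hj])

lemma card_monochromatic_mul_le {A : Finset ι} (hA : A.Nonempty) :
    #(monochromatic α A) * Fintype.card α ^ (#A - 1) ≤ Fintype.card α ^ Fintype.card ι := by
  obtain ⟨x₀, hx₀⟩ := hA
  have hcard : #(monochromatic α A) ≤ Fintype.card α * Fintype.card α ^ #Aᶜ :=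
    calc #(monochromatic α A) ≤ #(univ : Finset (α × (↥Aᶜ → α))) := by
          refine card_le_card_of_injOn (fun f => (f x₀, fun i => f i)) (by simp) ?_
          intro f hf g hg hfg
          simp only [monochromatic, coe_filter, mem_univ, true_and, Set.mem_ofPred_eq] at hf hg
          simp only [Prod.mk.injEq, funext_iff] at hfg
          funext i
          by_cases hi : i ∈ A
          · rw [hf i hi x₀ hx₀, hg i hi x₀ hx₀, hfg.1]
          · exact hfg.2 ⟨i, mem_compl.2 hi⟩
      _ = Fintype.card α * Fintype.card α ^ #Aᶜ := by simp [card_compl]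
  have hA₁ : 1 ≤ #A := card_pos.2 ⟨x₀, hx₀⟩
  have hAι : #A ≤ Fintype.card ι := card_le_univ A
  calc #(monochromatic α A) * Fintype.card α ^ (#A - 1)
      ≤ Fintype.card α * Fintype.card α ^ #Aᶜ * Fintype.card α ^ (#A - 1) := by gcongr
    _ = Fintype.card α ^ Fintype.card ι := by
      rw [← pow_succ', ← pow_add, card_compl]; congr 1; omega

theorem card_avoiding_inter_monochromatic_le {A : Finset ι} (hA : A.Nonempty)
    {S : Finset (Finset ι)} (hS : ∀ s ∈ S, Disjoint s A) :
    Fintype.card α ^ (#A - 1) * #(avoiding (monochromatic α) S ∩ monochromatic α A)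
      ≤ #(avoiding (monochromatic α) S) := by
  have hR : DependsOn (fun f : ι → α => ∀ s ∈ S, f ∉ monochromatic α s) (A : Set ι)ᶜ :=
    fun f g h => propext <| forall₂_congr fun s hs => not_congr <| Iff.of_eq <|
      (dependsOn_mem_monochromatic s).mono
        (Set.subset_compl_iff_disjoint_right.2 (disjoint_coe.2 (hS s hs))) h
  have key := card_filter_and_mul_card_pi (dependsOn_mem_monochromatic A) hR
  have hPR : ({f | f ∈ monochromatic α A ∧ ∀ s ∈ S, f ∉ monochromatic α s} : Finset (ι → α))
      = avoiding (monochromatic α) S ∩ monochromatic α A := by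
    ext f; simp [avoiding, and_comm]
  have hav : ({f | ∀ s ∈ S, f ∉ monochromatic α s} : Finset (ι → α))
      = avoiding (monochromatic α) S := by
    ext; simp [avoiding]
  rw [hPR, hav, filter_mem_eq_inter, univ_inter, Fintype.card_fun] at key
  rcases Nat.eq_zero_or_pos (Fintype.card α ^ Fintype.card ι) with h0 | hpos
  · have h := card_le_univ (avoiding (monochromatic α) S ∩ monochromatic α A)
    rw [Fintype.card_fun, h0, Nat.le_zero] at h
    simp [h]
  refine Nat.le_of_mul_le_mul_right ?_ hpos
  calc Fintype.card α ^ (#A - 1) * #(avoiding (monochromatic α) S ∩ monochromatic α A)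
        * Fintype.card α ^ Fintype.card ι
      = #(monochromatic α A) * Fintype.card α ^ (#A - 1) * #(avoiding (monochromatic α) S) := by
        rw [mul_assoc, key]; ring
    _ ≤ Fintype.card α ^ Fintype.card ι * #(avoiding (monochromatic α) S) := by
        gcongr; exact card_monochromatic_mul_le hA
    _ = #(avoiding (monochromatic α) S) * Fintype.card α ^ Fintype.card ι := mul_comm _ _

end UniformColorings

section ArithmeticProgressions

variable (n k : ℕ)

/-- Points of `{1, …, n}` are coordinates of `Fin (n + 1)`; coordinate `0` is never used. -/
def apFinset (a d : ℕ) : Finset (Fin (n + 1)) :=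
  (range k).image fun i => Fin.ofNat (n + 1) (a + i * d)

def apParams : Finset (ℕ × ℕ) :=
  {p ∈ Icc 1 n ×ˢ Icc 1 n | p.1 + (k - 1) * p.2 ≤ n}

def apFinsets : Finset (Finset (Fin (n + 1))) :=
  (apParams n k).image fun p => apFinset n k p.1 p.2

variable {n k}

lemma mem_apParams (hk : 2 ≤ k) {p : ℕ × ℕ} :
    p ∈ apParams n k ↔ 1 ≤ p.1 ∧ 1 ≤ p.2 ∧ p.1 + (k - 1) * p.2 ≤ n := by
  have : p.2 ≤ (k - 1) * p.2 := Nat.le_mul_of_pos_left _ (by omega)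
  simp only [apParams, mem_filter, mem_product, mem_Icc]
  omega

lemma add_mul_lt_succ_of_le {a d i : ℕ} (h : a + (k - 1) * d ≤ n) (hi : i < k) :
    a + i * d < n + 1 := by
  have := Nat.mul_le_mul_right d (show i ≤ k - 1 by omega)
  omega

lemma mem_apFinset {a d : ℕ} (h : a + (k - 1) * d ≤ n) {x : Fin (n + 1)} :
    x ∈ apFinset n k a d ↔ ∃ i < k, (x : ℕ) = a + i * d := by
  simp only [apFinset, mem_image, mem_range]
  constructor
  · rintro ⟨i, hi, rfl⟩
    exact ⟨i, hi, by rw [Fin.val_ofNat, Nat.mod_eq_of_lt (add_mul_lt_succ_of_le h hi)]⟩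
  · rintro ⟨i, hi, hx⟩
    exact ⟨i, hi, by rw [← hx, Fin.ofNat_val_eq_self]⟩

lemma card_apFinset {a d : ℕ} (hd : 1 ≤ d) (h : a + (k - 1) * d ≤ n) :
    #(apFinset n k a d) = k := by
  rw [apFinset, card_image_of_injOn, card_range]
  intro i hi j hj hij
  have := congrArg Fin.val hij
  simp only [Fin.val_ofNat, Nat.mod_eq_of_lt (add_mul_lt_succ_of_le h (mem_range.1 hi)),
    Nat.mod_eq_of_lt (add_mul_lt_succ_of_le h (mem_range.1 hj))] at this
  exact Nat.eq_of_mul_eq_mul_right hd (by omega)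

lemma card_apParams_filter_mem_le (hk : 2 ≤ k) (x : Fin (n + 1)) :
    #{p ∈ apParams n k | x ∈ apFinset n k p.1 p.2} ≤ k * ((n - 1) / (k - 1)) := by
  calc #{p ∈ apParams n k | x ∈ apFinset n k p.1 p.2}
      ≤ #((range k ×ˢ Icc 1 ((n - 1) / (k - 1))).image
          fun q => ((x : ℕ) - q.1 * q.2, q.2)) := by
        refine card_le_card fun p hp => ?_
        obtain ⟨hp, hx⟩ := mem_filter.1 hp
        obtain ⟨ha, hd, hn⟩ := (mem_apParams hk).1 hp
        obtain ⟨i, hi, hxi⟩ := (mem_apFinset hn).1 hx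
        refine mem_image.2 ⟨(i, p.2), mem_product.2 ⟨mem_range.2 hi, mem_Icc.2 ⟨hd, ?_⟩⟩, ?_⟩
        · rw [Nat.le_div_iff_mul_le (by omega), mul_comm]; dsimp only; omega
        · ext <;> simp only; omega
    _ ≤ k * ((n - 1) / (k - 1)) := by
        refine card_image_le.trans ?_
        rw [card_product, card_range, Nat.card_Icc, Nat.add_sub_cancel]

lemma card_apFinsets_filter_not_disjoint_le (hk : 2 ≤ k) {t : Finset (Fin (n + 1))}
    (ht : t ∈ apFinsets n k) :
    #{s ∈ apFinsets n k | ¬ Disjoint s t} ≤ k * (k * ((n - 1) / (k - 1))) := by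
  obtain ⟨p, hp, rfl⟩ := mem_image.1 ht
  obtain ⟨-, hd, hn⟩ := (mem_apParams hk).1 hp
  calc #{s ∈ apFinsets n k | ¬ Disjoint s (apFinset n k p.1 p.2)}
      ≤ #((apFinset n k p.1 p.2).biUnion fun x =>
          {p ∈ apParams n k | x ∈ apFinset n k p.1 p.2}.image fun p => apFinset n k p.1 p.2) := by
        refine card_le_card fun s hs => ?_
        obtain ⟨hs, hst⟩ := mem_filter.1 hs
        obtain ⟨p', hp', rfl⟩ := mem_image.1 hs
        obtain ⟨x, hxs, hxt⟩ := not_disjoint_iff.1 hst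
        exact mem_biUnion.2 ⟨x, hxt, mem_image.2 ⟨p', mem_filter.2 ⟨hp', hxs⟩, rfl⟩⟩
    _ ≤ ∑ x ∈ apFinset n k p.1 p.2, k * ((n - 1) / (k - 1)) :=
        card_biUnion_le.trans (sum_le_sum fun x _ =>
          card_image_le.trans (card_apParams_filter_mem_le hk x))
    _ = k * (k * ((n - 1) / (k - 1))) := by rw [sum_const, card_apFinset hd hn, smul_eq_mul]

end ArithmeticProgressions

lemma hasMonoAP.one_le {c k n : ℕ} {χ : ℕ → Fin c} (h : hasMonoAP c k n χ) : 1 ≤ n := by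
  obtain ⟨a, d, ha, -, hn, -⟩ := h
  omega

lemma hasMonoAP.mono {c k n n' : ℕ} {χ : ℕ → Fin c} (hn : n ≤ n') (h : hasMonoAP c k n χ) :
    hasMonoAP c k n' χ := by
  obtain ⟨a, d, ha, hd, han, hχ⟩ := h
  exact ⟨a, d, ha, hd, han.trans hn, hχ⟩

theorem exists_not_hasMonoAP {c k n : ℕ} (hk : 2 ≤ k) (hq : 3 ≤ c ^ (k - 1))
    (hdeg : 4 * (k * (k * ((n - 1) / (k - 1)))) ≤ c ^ (k - 1)) :
    ∃ χ : ℕ → Fin c, ¬ hasMonoAP c k n χ := by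
  have : NeZero c := ⟨by rintro rfl; rw [zero_pow (by omega)] at hq; omega⟩
  obtain ⟨g, hg⟩ := avoiding_nonempty (E := monochromatic (Fin c)) (T := apFinsets n k)
    (adj := fun s t => ¬ Disjoint s t) hq
    (fun t ht S _ hS => by
      obtain ⟨p, hp, rfl⟩ := mem_image.1 ht
      obtain ⟨-, hd, hn⟩ := (mem_apParams hk).1 hp
      have hcard := card_apFinset hd hn
      simpa [hcard] using card_avoiding_inter_monochromatic_le (α := Fin c)
        (card_pos.1 (by omega)) fun s hs => not_not.1 (hS s hs))
    (fun t ht =>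
      (Nat.mul_le_mul_left 4 (card_apFinsets_filter_not_disjoint_le hk ht)).trans hdeg)
  refine ⟨fun m => g (Fin.ofNat (n + 1) m), ?_⟩
  rintro ⟨a, d, ha, hd, hn, hχ⟩
  refine mem_avoiding.1 hg _ (mem_image.2 ⟨(a, d), (mem_apParams hk).2 ⟨ha, hd, hn⟩, rfl⟩) ?_
  have hconst : ∀ x ∈ apFinset n k a d, g x = g (Fin.ofNat (n + 1) a) := by
    intro x hx
    obtain ⟨i, hi, rfl⟩ := mem_image.1 hx
    exact hχ i (mem_range.1 hi)
  simp only [monochromatic, mem_filter, mem_univ, true_and]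
  intro x hx y hy
  rw [hconst x hx, hconst y hy]

theorem DependsOn.isClopen_setOf {ι : Type*} {X : ι → Type*} [∀ i, TopologicalSpace (X i)]
    [∀ i, DiscreteTopology (X i)] {P : (Π i, X i) → Prop} {s : Set ι} (hs : s.Finite)
    (hP : DependsOn P s) : IsClopen {x | P x} := by
  obtain ⟨g, rfl⟩ := dependsOn_iff_exists_comp.1 hP
  have : Finite s := hs.to_subtype
  exact (isClopen_discrete {y | g y}).preimage (continuous_pi fun i => continuous_apply _)

lemma dependsOn_hasMonoAP (c k n : ℕ) : DependsOn (hasMonoAP c k n) (Set.Iic n) := by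
  suffices ∀ χ χ' : ℕ → Fin c, (∀ m ≤ n, χ m = χ' m) →
      hasMonoAP c k n χ → hasMonoAP c k n χ' from
    fun χ χ' h => propext ⟨this χ χ' h, this χ' χ fun m hm => (h m hm).symm⟩
  rintro χ χ' h ⟨a, d, ha, hd, hn, hχ⟩
  refine ⟨a, d, ha, hd, hn, fun i hi => ?_⟩
  have : i * d ≤ (k - 1) * d := Nat.mul_le_mul_right d (by omega)
  rw [← h _ (by omega), ← h a (by omega), hχ i hi]

lemma isClosed_setOf_not_hasMonoAP (c k n : ℕ) :
    IsClosed {χ : ℕ → Fin c | ¬ hasMonoAP c k n χ} :=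
  ((dependsOn_hasMonoAP c k n).isClopen_setOf (Set.finite_Iic n)).compl.isClosed

/-- The finitary van der Waerden theorem, from the infinitary one by compactness of the space of
colourings of `ℕ`. -/
theorem exists_forall_hasMonoAP (k c : ℕ) : ∃ n, ∀ χ : ℕ → Fin c, hasMonoAP c k n χ := by
  by_contra! h
  obtain ⟨χ, hχ⟩ := IsCompact.nonempty_iInter_of_sequence_nonempty_isCompact_isClosed
    (fun n => {χ : ℕ → Fin c | ¬ hasMonoAP c k n χ})
    (fun n χ hχ hmono => hχ (hmono.mono n.le_succ)) h
    (isClosed_setOf_not_hasMonoAP c k 0).isCompact (isClosed_setOf_not_hasMonoAP c k)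
  obtain ⟨a, ha, b, col, hcol⟩ :=
    Combinatorics.exists_mono_homothetic_copy (range k) fun m => χ (m + 1)
  refine Set.mem_iInter.1 hχ (b + 1 + (k - 1) * a) ⟨b + 1, a, by omega, ha, le_rfl, fun i hi => ?_⟩
  have h₀ : χ (b + 1) = col := by simpa using hcol 0 (mem_range.2 (by omega))
  have hᵢ : χ (a * i + b + 1) = col := hcol i (mem_range.2 hi)
  rw [h₀, ← hᵢ]
  congr 1
  ring

theorem sub_one_mul_pow_le_of_forall_hasMonoAP {c k n : ℕ} (hk : 2 ≤ k) (hc : 2 ≤ c)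
    (h : ∀ χ : ℕ → Fin c, hasMonoAP c k n χ) :
    (k - 1) * c ^ (k - 1) ≤ c ^ 2 * k ^ 2 * n := by
  by_contra! hlt
  have hn : 1 ≤ n := (h fun _ => ⟨0, by omega⟩).one_le
  have hc2 : 4 ≤ c ^ 2 := by nlinarith
  have hq : 3 ≤ c ^ (k - 1) := by
    have : k ^ 2 * c ^ 2 < k ^ 2 * c ^ (k - 1) :=
      calc k ^ 2 * c ^ 2 ≤ c ^ 2 * k ^ 2 * n := by
            rw [mul_comm (k ^ 2)]; exact Nat.le_mul_of_pos_right _ hn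
        _ < (k - 1) * c ^ (k - 1) := hlt
        _ ≤ k ^ 2 * c ^ (k - 1) := by
            gcongr; exact (Nat.sub_le k 1).trans (Nat.le_self_pow two_ne_zero k)
    have := Nat.lt_of_mul_lt_mul_left this
    omega
  have hdeg : 4 * (k * (k * ((n - 1) / (k - 1)))) ≤ c ^ (k - 1) := by
    have hD := Nat.div_mul_le_self (n - 1) (k - 1)
    refine (Nat.lt_of_mul_lt_mul_left (a := k - 1) ?_).le
    calc (k - 1) * (4 * (k * (k * ((n - 1) / (k - 1)))))
        = 4 * k ^ 2 * ((n - 1) / (k - 1) * (k - 1)) := by ring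
      _ ≤ c ^ 2 * k ^ 2 * n := by gcongr; omega
      _ < (k - 1) * c ^ (k - 1) := hlt
  obtain ⟨χ, hχ⟩ := exists_not_hasMonoAP hk hq hdeg
  exact hχ (h χ)

/-- Main theorem: w(k;c) ≥ c^(k-3)·(k-1)/k² for all k ≥ 2 and c ≥ 2. -/
theorem vdW_lower_bound (k c : ℕ) (hk : 2 ≤ k) (hc : 2 ≤ c) :
    (c : ℝ) ^ ((k : ℝ) - 3) * ((k : ℝ) - 1) / (k : ℝ) ^ 2 ≤ (vdW k c : ℝ) := by
  have hmem : ∀ χ : ℕ → Fin c, hasMonoAP c k (vdW k c) χ :=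
    Nat.sInf_mem (exists_forall_hasMonoAP k c)
  have key : ((k - 1 : ℕ) : ℝ) * (c : ℝ) ^ (k - 1) ≤ (c : ℝ) ^ 2 * (k : ℝ) ^ 2 * vdW k c := by
    exact_mod_cast sub_one_mul_pow_le_of_forall_hasMonoAP hk hc hmem
  rw [Nat.cast_sub (by omega), Nat.cast_one] at key
  have hc0 : (0 : ℝ) < c := by positivity
  have hrpow : (c : ℝ) ^ ((k : ℝ) - 3) = (c : ℝ) ^ (k - 1) / (c : ℝ) ^ 2 := by
    rw [← Real.rpow_natCast, ← Real.rpow_two, ← Real.rpow_sub hc0, Nat.cast_sub (by omega)]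
    congr 1
    ring
  rw [hrpow, div_mul_eq_mul_div, div_div, div_le_iff₀ (by positivity)]
  linarith
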